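/- Let H be a Hilbert space, B(H) the bounded operators, K(H) the compacts, and π : B(H) → B(H)/K(H) the quotient map. Let L : A → B(H) be a positive linear map from a C*-algebra A, let a ∈ A₊, and suppose ‖π(L(a))‖ ≥ λ > 0. Then for every r > 1 there exists v ∈ B(H) with ‖v‖ ≤ √(r/λ) such that v* L(a) v = 1_{B(H)}. -/

import Mathlib

open scoped InnerProductSpace

section Aux

variable {E : Type*} [NormedAddCommGroup E] [InnerProductSpace ℂ E]

lemma aux_orthonormal_countable [TopologicalSpace.SeparableSpace E]
    {s : Set E} (hs : Orthonormal ℂ (Subtype.val : s → E)) : s.Countable := by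
  obtain ⟨D, hDc, hDd⟩ := TopologicalSpace.exists_countable_dense E
  have key : ∀ x : s, ∃ d, d ∈ D ∧ dist (x : E) d < Real.sqrt 2 / 2 := by
    intro x
    obtain ⟨d, hd1, hd2⟩ := hDd.exists_dist_lt (x : E)
      (show (0:ℝ) < Real.sqrt 2 / 2 by positivity)
    exact ⟨d, hd1, hd2⟩
  choose d hdD hdist using key
  haveI : Countable D := hDc.to_subtype
  have hdist2 : ∀ x y : s, x ≠ y → Real.sqrt 2 ≤ dist (x : E) (y : E) := by
    intro x y hxy
    have hinner : ⟪(x : E), (y : E)⟫_ℂ = 0 := hs.2 hxy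
    have hx1 : ‖(x : E)‖ = 1 := hs.1 x
    have hy1 : ‖(y : E)‖ = 1 := hs.1 y
    have hsq : ‖(x : E) - (y : E)‖ ^ 2 = 2 := by
      rw [@norm_sub_sq ℂ _ _ _ _, hinner, hx1, hy1]
      norm_num
    rw [dist_eq_norm]
    have h0 : (0:ℝ) ≤ ‖(x : E) - (y : E)‖ := norm_nonneg _
    nlinarith [Real.sq_sqrt (show (0:ℝ) ≤ 2 by norm_num),
      Real.sqrt_nonneg (2:ℝ)]
  have hinj : Function.Injective (fun x : s => (⟨d x, hdD x⟩ : D)) := by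
    intro x y hxy
    by_contra hne
    have h1 := hdist x
    have h2 := hdist y
    have hd : d x = d y := congrArg Subtype.val hxy
    have := hdist2 x y hne
    have : dist (x : E) (y : E) ≤ dist (x : E) (d x) + dist (d y) (y : E) := by
      rw [hd]; exact dist_triangle _ _ _
    rw [dist_comm (d y)] at this
    linarith
  rw [← Set.countable_coe_iff]
  exact hinj.countable

lemma aux_hilbertBasis_nat [CompleteSpace E] [TopologicalSpace.SeparableSpace E]
    (hinf : ¬ FiniteDimensional ℂ E) : Nonempty (HilbertBasis ℕ ℂ E) := by
  obtain ⟨w, b, hb⟩ := exists_hilbertBasis ℂ E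
  have horth : Orthonormal ℂ (Subtype.val : w → E) := hb ▸ b.orthonormal
  have hcount : w.Countable := aux_orthonormal_countable horth
  have hdense : (Submodule.span ℂ (Set.range ⇑b)).topologicalClosure = ⊤ := b.dense_span
  rw [hb, Subtype.range_coe] at hdense
  have hwinf : w.Infinite := by
    by_contra hfin
    rw [Set.not_infinite] at hfin
    have hfd : FiniteDimensional ℂ (Submodule.span ℂ w) :=
      FiniteDimensional.span_of_finite ℂ hfin
    have hclosed : IsClosed ((Submodule.span ℂ w : Submodule ℂ E) : Set E) :=
      Submodule.closed_of_finiteDimensional _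
    have htop : (Submodule.span ℂ w : Submodule ℂ E) = ⊤ := by
      rw [← hclosed.submodule_topologicalClosure_eq]; exact hdense
    have : FiniteDimensional ℂ (⊤ : Submodule ℂ E) := htop ▸ hfd
    exact hinf (Submodule.topEquiv.finiteDimensional)
  haveI : Countable w := hcount.to_subtype
  haveI : Infinite w := hwinf.to_subtype
  obtain ⟨hden⟩ : Nonempty (Denumerable w) :=
    nonempty_denumerable_iff.mpr ⟨‹_›, ‹_›⟩
  haveI := hden
  let e : w ≃ ℕ := Denumerable.eqv w
  have honb : Orthonormal ℂ (⇑b ∘ e.symm) := b.orthonormal.comp _ e.symm.injective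
  have hrange : Set.range (⇑b ∘ e.symm) = Set.range ⇑b :=
    e.symm.surjective.range_comp ⇑b
  refine ⟨HilbertBasis.mk honb ?_⟩
  rw [hrange, hb, Subtype.range_coe, hdense]

lemma aux_compact_of_range_le [CompleteSpace E] {K : E →L[ℂ] E} {F : Submodule ℂ E}
    [FiniteDimensional ℂ F] (h : ∀ x, K x ∈ F) : IsCompactOperator ⇑K := by
  rw [isCompactOperator_iff_exists_mem_nhds_isCompact_closure_image]
  refine ⟨Metric.ball 0 1, Metric.ball_mem_nhds 0 one_pos, ?_⟩
  haveI : ProperSpace F := FiniteDimensional.proper ℂ F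
  have hcpt : IsCompact ((Subtype.val : F → E) '' Metric.closedBall 0 ‖K‖) :=
    (ProperSpace.isCompact_closedBall (0 : F) ‖K‖).image continuous_subtype_val
  apply IsCompact.of_isClosed_subset hcpt isClosed_closure
  have hsub : ⇑K '' Metric.ball 0 1 ⊆ (Subtype.val : F → E) '' Metric.closedBall 0 ‖K‖ := by
    rintro - ⟨x, hx, rfl⟩
    refine ⟨⟨K x, h x⟩, ?_, rfl⟩
    rw [Metric.mem_closedBall, dist_zero_right]
    calc ‖(⟨K x, h x⟩ : F)‖ = ‖K x‖ := rfl
      _ ≤ ‖K‖ * ‖x‖ := K.le_opNorm x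
      _ ≤ ‖K‖ * 1 := by
          have := Metric.mem_ball.mp hx
          rw [dist_zero_right] at this
          exact mul_le_mul_of_nonneg_left this.le (norm_nonneg K)
      _ = ‖K‖ := mul_one _
  exact closure_minimal hsub hcpt.isClosed

end Aux

/-- If `L : A → B(H)` is a positive linear map, `a ∈ A₊`, and the image of `L(a)`
in the Calkin algebra has norm `≥ λ > 0` (expressed as: `‖L(a) − k‖ ≥ λ` for every
compact `k`), then for every `r > 1` there is `v ∈ B(H)` with `‖v‖ ≤ √(r/λ)` and
`v* L(a) v = 1`. -/
theorem stmt_11 {A : Type*} [NormedRing A] [StarRing A] [CStarRing A] [CompleteSpace A]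
    [NormedAlgebra ℂ A] [StarModule ℂ A] [PartialOrder A] [StarOrderedRing A]
    {H : Type*} [NormedAddCommGroup H] [InnerProductSpace ℂ H] [CompleteSpace H]
    [TopologicalSpace.SeparableSpace H]
    (L : A →ₗ[ℂ] (H →L[ℂ] H))
    (hL : ∀ x : A, 0 ≤ x → (L x).IsPositive)
    (a : A) (ha : 0 ≤ a) (lam : ℝ) (hlam : 0 < lam)
    (hfull : ∀ k : H →L[ℂ] H, IsCompactOperator ⇑k → lam ≤ ‖L a - k‖)
    (r : ℝ) (hr : 1 < r) :
    ∃ v : H →L[ℂ] H, ‖v‖ ≤ Real.sqrt (r / lam) ∧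
      ContinuousLinearMap.adjoint v ∘L L a ∘L v = 1 := by
  classical
  set T : H →L[ℂ] H := L a with hT_def
  have hTpos : T.IsPositive := hL a ha
  have hTsa : IsSelfAdjoint T := hTpos.isSelfAdjoint
  have hTnn : (0 : H →L[ℂ] H) ≤ T := (ContinuousLinearMap.nonneg_iff_isPositive T).mpr hTpos
  have hr0 : (0:ℝ) < r := lt_trans one_pos hr
  set c : ℝ := lam / r with hc_def
  have hc0 : 0 < c := div_pos hlam hr0
  have hclam : c < lam := by
    rw [hc_def, div_lt_iff₀ hr0]; nlinarith
  set μ : ℝ := (c + lam) / 2 with hμ_def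
  have hcμ : c < μ := by rw [hμ_def]; linarith
  have hμlam : μ < lam := by rw [hμ_def]; linarith
  have hμ0 : (0:ℝ) < μ := lt_trans hc0 hcμ
  -- the three functions
  set f : ℝ → ℝ := fun t => max (min t μ - c) 0 / (μ - c) with hf_def
  set g : ℝ → ℝ := fun t => (Real.sqrt (max t c))⁻¹ with hg_def
  set h : ℝ → ℝ := fun t => t * (max t c)⁻¹ with hh_def
  have hf_cont : Continuous f :=
    (((continuous_id.min continuous_const).sub continuous_const).max
      continuous_const).div_const _
  have hg_cont : Continuous g := by
    refine Continuous.inv₀ (Real.continuous_sqrt.comp (continuous_id.max continuous_const)) ?_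
    intro t
    exact ne_of_gt (Real.sqrt_pos.mpr (lt_of_lt_of_le hc0 (le_max_right t c)))
  have hh_cont : Continuous h := by
    refine continuous_id.mul (Continuous.inv₀ (continuous_id.max continuous_const) ?_)
    intro t
    exact ne_of_gt (lt_of_lt_of_le hc0 (le_max_right t c))
  -- pointwise facts
  have hf_nonneg : ∀ t, 0 ≤ f t := fun t =>
    div_nonneg (le_max_right _ _) (by linarith)
  have hf_le_one : ∀ t, f t ≤ 1 := by
    intro t
    rw [hf_def]
    apply div_le_one_of_le₀ _ (by linarith)
    have : min t μ ≤ μ := min_le_right _ _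
    apply max_le (by linarith) (by linarith)
  have hf_eq_one : ∀ t, μ ≤ t → f t = 1 := by
    intro t ht
    show max (min t μ - c) 0 / (μ - c) = 1
    rw [min_eq_right ht, max_eq_left (by linarith), div_self (by linarith)]
  have hf_eq_zero : ∀ t, t ≤ c → f t = 0 := by
    intro t ht
    have h1 : min t μ - c ≤ 0 := by
      have : min t μ ≤ t := min_le_left _ _
      linarith
    show max (min t μ - c) 0 / (μ - c) = 0
    rw [max_eq_right h1, zero_div]
  have hh_eq_one : ∀ t, c ≤ t → t ≠ c → h t = 1 := by
    intro t ht hne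
    have ht' : c < t := lt_of_le_of_ne ht (Ne.symm hne)
    show t * (max t c)⁻¹ = 1
    rw [max_eq_left ht]
    exact mul_inv_cancel₀ (by linarith)
  -- operators
  set gT : H →L[ℂ] H := cfc g T with hgT_def
  set hT : H →L[ℂ] H := cfc h T with hhT_def
  set K : H →L[ℂ] H := cfc f T with hK_def
  have hgT_sa : IsSelfAdjoint gT := cfc_predicate g T
  -- products
  have hgtg_fun : ∀ t : ℝ, g t * id t * g t = h t := by
    intro t
    have hm : (0:ℝ) < max t c := lt_of_lt_of_le hc0 (le_max_right t c)
    show (Real.sqrt (max t c))⁻¹ * t * (Real.sqrt (max t c))⁻¹ = t * (max t c)⁻¹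
    rw [mul_comm (Real.sqrt (max t c))⁻¹ t, mul_assoc, ← mul_inv,
      Real.mul_self_sqrt hm.le]
  have hgTg : gT * T * gT = hT := by
    have e1 : cfc (fun t : ℝ => g t * id t) T = gT * T := by
      rw [cfc_mul g id T hg_cont.continuousOn continuousOn_id, cfc_id ℝ T hTsa]
    have e2 : cfc (fun t : ℝ => g t * id t * g t) T = gT * T * gT := by
      rw [cfc_mul (fun t : ℝ => g t * id t) g T ((hg_cont.mul continuous_id).continuousOn) hg_cont.continuousOn, e1]
    rw [← e2, hhT_def]
    exact cfc_congr fun t _ => hgtg_fun t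
  have hhf_fun : ∀ t : ℝ, h t * f t = f t := by
    intro t
    rcases le_or_gt t c with htc | hct
    · rw [hf_eq_zero t htc, mul_zero]
    · rw [hh_eq_one t hct.le (ne_of_gt hct), one_mul]
  have hhK : hT * K = K := by
    rw [hhT_def, hK_def, ← cfc_mul h f T hh_cont.continuousOn hf_cont.continuousOn]
    exact cfc_congr fun t _ => hhf_fun t
  -- the subspace
  set F : Submodule ℂ H := LinearMap.ker (((1 - hT : H →L[ℂ] H) : H →ₗ[ℂ] H)) with hF_def
  have hF_mem : ∀ x : H, x ∈ F ↔ hT x = x := by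
    intro x
    rw [hF_def, LinearMap.mem_ker]
    constructor
    · intro hx
      have : (1 - hT) x = 0 := hx
      rw [ContinuousLinearMap.sub_apply, ContinuousLinearMap.one_apply, sub_eq_zero] at this
      exact this.symm
    · intro hx
      show (1 - hT) x = 0
      rw [ContinuousLinearMap.sub_apply, ContinuousLinearMap.one_apply, hx, sub_self]
  have hK_mem : ∀ x : H, K x ∈ F := by
    intro x
    rw [hF_mem]
    calc hT (K x) = (hT * K) x := rfl
      _ = K x := by rw [hhK]
  have hF_closed : IsClosed (F : Set H) := by
    rw [hF_def]
    exact ContinuousLinearMap.isClosed_ker _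
  haveI : CompleteSpace F := hF_closed.completeSpace_coe
  -- infinite dimensionality of F
  have hFinf : ¬ FiniteDimensional ℂ F := by
    intro hfin
    have hKcpt : IsCompactOperator ⇑K := aux_compact_of_range_le hK_mem
    have hTKcpt : IsCompactOperator ⇑(T ∘L K) := by
      exact hKcpt.continuous_comp T.continuous
    have hle := hfull (T ∘L K) hTKcpt
    have heq : T - T ∘L K = cfc (fun t : ℝ => t - t * f t) T := by
      have e2 : cfc (fun t : ℝ => t - t * f t) T
          = cfc (id : ℝ → ℝ) T - cfc (fun t : ℝ => t * f t) T :=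
        cfc_sub id (fun t : ℝ => t * f t) T continuousOn_id
          ((continuous_id.mul hf_cont).continuousOn)
      have e3 : cfc (fun t : ℝ => t * f t) T = cfc (id : ℝ → ℝ) T * cfc f T :=
        cfc_mul id f T continuousOn_id hf_cont.continuousOn
      have e4 : cfc (id : ℝ → ℝ) T = T := cfc_id ℝ T hTsa
      rw [e2, e3, e4]
      rfl
    have hbound : ‖T - T ∘L K‖ ≤ μ := by
      rw [heq]
      apply norm_cfc_le hμ0.le
      intro t ht
      have ht0 : 0 ≤ t := spectrum_nonneg_of_nonneg hTnn ht
      rcases le_or_gt μ t with hμt | htμ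
      · rw [hf_eq_one t hμt]
        simp only [mul_one, sub_self, norm_zero]
        exact hμ0.le
      · have h1 : 0 ≤ 1 - f t := by linarith [hf_le_one t]
        have h2 : t - t * f t = t * (1 - f t) := by ring
        rw [Real.norm_eq_abs, h2, abs_of_nonneg (mul_nonneg ht0 h1)]
        calc t * (1 - f t) ≤ t * 1 := by
              apply mul_le_mul_of_nonneg_left _ ht0
              linarith [hf_nonneg t]
          _ ≤ μ := by linarith
    linarith
  have hHinf : ¬ FiniteDimensional ℂ H := by
    intro hfin
    exact hFinf inferInstance
  -- separability of F
  haveI : SecondCountableTopology H := UniformSpace.secondCountable_of_separable H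
  haveI : SecondCountableTopology F := inferInstance
  haveI : TopologicalSpace.SeparableSpace F :=
    TopologicalSpace.SecondCountableTopology.to_separableSpace
  -- bases and the isometry u
  obtain ⟨bH⟩ := aux_hilbertBasis_nat (E := H) hHinf
  obtain ⟨bF⟩ := aux_hilbertBasis_nat (E := F) hFinf
  set iso : H ≃ₗᵢ[ℂ] F := bH.repr.trans bF.repr.symm with hiso_def
  set u : H →L[ℂ] H := F.subtypeL ∘L (iso.toLinearIsometry.toContinuousLinearMap) with hu_def
  have hu_apply : ∀ x : H, u x = (iso x : H) := fun x => rfl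
  have hu_range : ∀ x : H, u x ∈ F := fun x => by rw [hu_apply]; exact (iso x).2
  have hu_adj : ContinuousLinearMap.adjoint u ∘L u = 1 := by
    ext x
    apply ext_inner_right ℂ
    intro y
    rw [ContinuousLinearMap.comp_apply, ContinuousLinearMap.adjoint_inner_left,
      ContinuousLinearMap.one_apply, hu_apply, hu_apply]
    rw [← Submodule.coe_inner]
    exact iso.inner_map_map x y
  have hu_norm : ‖u‖ ≤ 1 := by
    apply ContinuousLinearMap.opNorm_le_bound _ zero_le_one
    intro x
    rw [hu_apply, one_mul]
    exact le_of_eq (iso.norm_map x)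
  -- the final operator
  refine ⟨gT ∘L u, ?_, ?_⟩
  · have hgT_norm : ‖gT‖ ≤ (Real.sqrt c)⁻¹ := by
      apply norm_cfc_le (by positivity)
      intro t ht
      rw [hg_def, Real.norm_eq_abs, abs_of_nonneg (by positivity)]
      apply inv_anti₀ (Real.sqrt_pos.mpr hc0)
      exact Real.sqrt_le_sqrt (le_max_right t c)
    have hrlam : r / lam = c⁻¹ := by
      rw [hc_def]; field_simp
    rw [hrlam, Real.sqrt_inv]
    calc ‖gT ∘L u‖ ≤ ‖gT‖ * ‖u‖ := ContinuousLinearMap.opNorm_comp_le _ _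
      _ ≤ (Real.sqrt c)⁻¹ * 1 := by
          apply mul_le_mul hgT_norm hu_norm (norm_nonneg u) (by positivity)
      _ = (Real.sqrt c)⁻¹ := mul_one _
  · have hadj : ContinuousLinearMap.adjoint (gT ∘L u)
        = ContinuousLinearMap.adjoint u ∘L gT := by
      rw [ContinuousLinearMap.adjoint_comp, hgT_sa.adjoint_eq]
    have hmid : gT ∘L (T ∘L (gT ∘L u)) = hT ∘L u := by
      calc gT ∘L (T ∘L (gT ∘L u)) = (gT * T * gT) ∘L u := by
            rw [ContinuousLinearMap.mul_def, ContinuousLinearMap.mul_def]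
            rw [ContinuousLinearMap.comp_assoc, ContinuousLinearMap.comp_assoc]
        _ = hT ∘L u := by rw [hgTg]
    have hhTu : hT ∘L u = u := by
      ext x
      exact (hF_mem (u x)).mp (hu_range x)
    calc ContinuousLinearMap.adjoint (gT ∘L u) ∘L L a ∘L (gT ∘L u)
        = (ContinuousLinearMap.adjoint u ∘L gT) ∘L T ∘L (gT ∘L u) := by rw [hadj]
      _ = ContinuousLinearMap.adjoint u ∘L (gT ∘L (T ∘L (gT ∘L u))) := by
          simp only [ContinuousLinearMap.comp_assoc]
      _ = ContinuousLinearMap.adjoint u ∘L (hT ∘L u) := by rw [hmid]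
      _ = ContinuousLinearMap.adjoint u ∘L u := by rw [hhTu]
      _ = 1 := hu_adj
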